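/- Fix a real constant c and let h : ℝ → ℝ be twice differentiable. Define H : ℝ³ → ℝ by H(x, ν, r) = c·h(x)·r². Then for all (x, ν, r), ∂x H·∂r∂r H − ∂r H·∂x∂r H − ∂x∂x H + ∂r∂ν H = −c·r²·( h''(x) + 2·c·h(x)·h'(x) ). In particular, for c ≠ 0, H satisfies the hyperCR equation H_x H_rr − H_r H_xr − H_xx + H_rν = 0 identically in (x, ν, r) if and only if h satisfies h'' = −2c·h·h' on ℝ. -/

import Mathlib

/-! For a separable `H(x, ν, r) = f(x) g(r)` the hyperCR expression is
`f f' (g g'' - g'²) - f'' g`, and `g g'' - g'² = -2r²` for `g = r²`. With `f = c h` this is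
`-c r² (h'' + 2 c h h')`; evaluating at `r = 1` gives the equivalence when `c ≠ 0`. -/

/-- The left-hand side `H_x H_rr - H_r H_xr - H_xx + H_rν` of the hyperCR equation. -/
noncomputable def hyperCR (H : ℝ → ℝ → ℝ → ℝ) (x ν r : ℝ) : ℝ :=
  deriv (fun x' => H x' ν r) x * deriv (deriv fun r' => H x ν r') r
    - deriv (fun r' => H x ν r') r * deriv (fun x' => deriv (fun r' => H x' ν r') r) x
    - deriv (deriv fun x' => H x' ν r) x
    + deriv (fun r' => deriv (fun ν' => H x ν' r') ν) r

theorem hyperCR_mul (f g : ℝ → ℝ) (x ν r : ℝ) :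
    hyperCR (fun x _ r => f x * g r) x ν r =
      f x * deriv f x * (g r * deriv (deriv g) r - deriv g r ^ 2)
        - deriv (deriv f) x * g r := by
  -- `deriv (fun y => a * u y) = a * deriv u` holds even where `u` is not differentiable (both are `0`)
  simp only [hyperCR, deriv_mul_const_field, deriv_mul_const_field', deriv_const_mul_field,
    deriv_const_mul_field', deriv_const]
  ring

theorem hyperCR_mul_sq (f : ℝ → ℝ) (x ν r : ℝ) :
    hyperCR (fun x _ r => f x * r ^ 2) x ν r =
      -r ^ 2 * (deriv (deriv f) x + 2 * f x * deriv f x) := by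
  have hg' : deriv (fun r : ℝ => r ^ 2) = fun r => 2 * r := by
    funext r; simp
  rw [hyperCR_mul, hg', deriv_const_mul_field, deriv_id'']
  ring

theorem nearHorizon_hyperCR_reduction_general
    (c : ℝ) (h : ℝ → ℝ)
    (H : ℝ → ℝ → ℝ → ℝ)
    (hdef : ∀ x ν r, H x ν r = c * h x * r ^ 2) :
    (∀ x ν r : ℝ,
      deriv (fun x' : ℝ => H x' ν r) x
          * deriv (deriv (fun r' : ℝ => H x ν r')) r
        - deriv (fun r' : ℝ => H x ν r') r
            * deriv (fun x' : ℝ => deriv (fun r' : ℝ => H x' ν r') r) x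
        - deriv (deriv (fun x' : ℝ => H x' ν r)) x
        + deriv (fun r' : ℝ => deriv (fun ν' : ℝ => H x ν' r') ν) r
      = -c * r ^ 2 * (deriv (deriv h) x + 2 * c * h x * deriv h x)) ∧
    (c ≠ 0 →
      ((∀ x ν r : ℝ,
        deriv (fun x' : ℝ => H x' ν r) x
            * deriv (deriv (fun r' : ℝ => H x ν r')) r
          - deriv (fun r' : ℝ => H x ν r') r
              * deriv (fun x' : ℝ => deriv (fun r' : ℝ => H x' ν r') r) x
          - deriv (deriv (fun x' : ℝ => H x' ν r)) x
          + deriv (fun r' : ℝ => deriv (fun ν' : ℝ => H x ν' r') ν) r = 0) ↔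
        ∀ x : ℝ, deriv (deriv h) x = -2 * c * h x * deriv h x)) := by
  obtain rfl : H = fun x _ r => c * h x * r ^ 2 :=
    funext fun x => funext fun ν => funext fun r => hdef x ν r
  have key (x ν r : ℝ) : hyperCR (fun x _ r => c * h x * r ^ 2) x ν r
      = -c * r ^ 2 * (deriv (deriv h) x + 2 * c * h x * deriv h x) := by
    refine (hyperCR_mul_sq (fun x => c * h x) x ν r).trans ?_
    simp only [deriv_const_mul_field']
    ring
  refine ⟨key, fun hc => ⟨fun hzero x => ?_, fun hode x ν r => ?_⟩⟩
  · have h1 : -c * (deriv (deriv h) x + 2 * c * h x * deriv h x) = 0 := by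
      simpa using (key x 0 1).symm.trans (hzero x 0 1)
    have hode := (mul_eq_zero.mp h1).resolve_left (neg_ne_zero.mpr hc)
    linarith
  · exact (key x ν r).trans (by rw [hode x]; ring)

/-- For `H(x,ν,r) = c h(x) r²` with `h` twice differentiable, the
hyperCR expression equals `−c r² (h'' + 2 c h h')`; hence for `c ≠ 0`, `H` solves
the hyperCR equation identically iff `h'' = −2 c h h'` on `ℝ`. -/
theorem nearHorizon_hyperCR_reduction
    (c : ℝ) (h : ℝ → ℝ)
    (hd1 : Differentiable ℝ h)
    (hd2 : Differentiable ℝ (deriv h))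
    (H : ℝ → ℝ → ℝ → ℝ)
    (hdef : ∀ x ν r, H x ν r = c * h x * r ^ 2) :
    (∀ x ν r : ℝ,
      deriv (fun x' : ℝ => H x' ν r) x
          * deriv (deriv (fun r' : ℝ => H x ν r')) r
        - deriv (fun r' : ℝ => H x ν r') r
            * deriv (fun x' : ℝ => deriv (fun r' : ℝ => H x' ν r') r) x
        - deriv (deriv (fun x' : ℝ => H x' ν r)) x
        + deriv (fun r' : ℝ => deriv (fun ν' : ℝ => H x ν' r') ν) r
      = -c * r ^ 2 * (deriv (deriv h) x + 2 * c * h x * deriv h x)) ∧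
    (c ≠ 0 →
      ((∀ x ν r : ℝ,
        deriv (fun x' : ℝ => H x' ν r) x
            * deriv (deriv (fun r' : ℝ => H x ν r')) r
          - deriv (fun r' : ℝ => H x ν r') r
              * deriv (fun x' : ℝ => deriv (fun r' : ℝ => H x' ν r') r) x
          - deriv (deriv (fun x' : ℝ => H x' ν r)) x
          + deriv (fun r' : ℝ => deriv (fun ν' : ℝ => H x ν' r') ν) r = 0) ↔
        ∀ x : ℝ, deriv (deriv h) x = -2 * c * h x * deriv h x)) :=
  nearHorizon_hyperCR_reduction_general c h H hdef
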